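/- arXiv:math/0702847 — 3 statements merged into one kernel-verified Lean document; each statement's English description precedes it below -/
import Mathlib

section
/- Let M be a generic monomial ideal with minimal generators m₁,…,m_r: whenever two distinct generators m_i, m_j have the same positive degree in some variable, some third generator m_k strictly divides lcm(m_i, m_j). If τ ⊆ {1,…,r} is not in the Scarf complex Δ_M (i.e., some other subset has the same lcm as τ), then there exists a minimal generator m_ℓ that strictly divides m_τ; in particular M ⊄ 𝔪^{α_τ}, where α_τ is the exponent vector of m_τ. -/
open MvPolynomial

noncomputable def mon {n : ℕ} (a : Fin n → ℕ) : MvPolynomial (Fin n) ℂ :=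
  ∏ i, X i ^ a i

def MinGens {n r : ℕ} (M : Ideal (MvPolynomial (Fin n) ℂ)) (a : Fin r → Fin n → ℕ) : Prop :=
  M = Ideal.span (Set.range fun j => mon (a j)) ∧
  ∀ j, mon (a j) ∉ Ideal.span ((fun k => mon (a k)) '' {k | k ≠ j})

/-- `z^{a'}` strictly divides `z^m`: it divides `z^m / zᵢ` for every variable `zᵢ`
dividing `z^m`. -/
def StrictlyDivides {n : ℕ} (a' m : Fin n → ℕ) : Prop :=
  ∀ i, 1 ≤ m i → ∀ j, a' j + (if j = i then 1 else 0) ≤ m j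

def lcmExp {n r : ℕ} (a : Fin r → Fin n → ℕ) (I : Finset (Fin r)) : Fin n → ℕ :=
  fun k => I.sup fun i => a i k

/-- Genericity: whenever two distinct minimal generators have the same positive degree
in some variable, a third generator strictly divides their lcm. -/
def Generic {n r : ℕ} (a : Fin r → Fin n → ℕ) : Prop :=
  ∀ j k : Fin r, a j ≠ a k → (∃ i, 1 ≤ a j i ∧ a j i = a k i) →
    ∃ l, a l ≠ a j ∧ a l ≠ a k ∧ StrictlyDivides (a l) (a j ⊔ a k)

lemma mon_eq_monomial {n : ℕ} (a : Fin n → ℕ) :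
    mon a = monomial (Finsupp.equivFunOnFinite.symm a) 1 := by
  rw [← prod_X_pow_eq_monomial]
  exact (Finset.prod_subset (Finset.subset_univ _) (fun x _ hx => by
    have h0 : a x = 0 := by simpa [Finsupp.notMem_support_iff] using hx
    show X x ^ a x = 1
    simp [h0])).symm

/-- Monotonicity of strict divisibility. -/
lemma strictlyDivides_mono {n : ℕ} {a' u m : Fin n → ℕ}
    (h : StrictlyDivides a' u) (hum : ∀ j, u j ≤ m j) (i0 : Fin n) (hi0 : 1 ≤ u i0) :
    StrictlyDivides a' m := by
  have hle : ∀ j, a' j ≤ u j := by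
    intro j
    have h1 := h i0 hi0 j
    by_cases hj : j = i0
    · simp only [if_pos hj] at h1; omega
    · simpa [if_neg hj] using h1
  intro i hi j
  by_cases hj : j = i
  · subst hj
    simp only [eq_self_iff_true, if_true]
    by_cases hui : 1 ≤ u j
    · have h1 := h j hui j
      simp only [eq_self_iff_true, if_true] at h1
      have h2 := hum j
      omega
    · have h1 := hle j
      have h2 := hum j
      omega
  · simp only [if_neg hj]
    have h1 := hle j
    have h2 := hum j
    omega

/-- If `M` is generic and `τ` is not a face of the Scarf complex, then some minimal
generator strictly divides `m_τ`; in particular `M ⊄ 𝔪^{α_τ}`. -/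
theorem stmt8 {n r : ℕ} (a : Fin r → Fin n → ℕ)
    (M : Ideal (MvPolynomial (Fin n) ℂ)) (hmin : MinGens M a) (hgen : Generic a)
    (τ : Finset (Fin r))
    (hτ : ∃ τ' : Finset (Fin r), τ' ≠ τ ∧ lcmExp a τ' = lcmExp a τ) :
    (∃ l : Fin r, StrictlyDivides (a l) (lcmExp a τ)) ∧
    ¬ (M ≤ Ideal.span {p : MvPolynomial (Fin n) ℂ |
        ∃ i, 1 ≤ lcmExp a τ i ∧ p = (X i : MvPolynomial (Fin n) ℂ) ^ lcmExp a τ i}) := by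
  obtain ⟨τ', hne, hlcm⟩ := hτ
  -- injectivity of a
  have hinj : Function.Injective a := by
    intro j k hjk
    by_contra hne'
    apply hmin.2 k
    apply Ideal.subset_span
    exact ⟨j, hne', by dsimp only; rw [hjk]⟩
  set m : Fin n → ℕ := lcmExp a τ with hm
  -- find l ∉ ρ with a l ≤ m and lcm ρ = m
  have key : ∃ (ρ : Finset (Fin r)) (l : Fin r), l ∉ ρ ∧ lcmExp a ρ = m ∧
      ∀ j, a l j ≤ m j := by
    by_cases h : ∃ l ∈ τ', l ∉ τ
    · obtain ⟨l, hl', hl⟩ := h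
      refine ⟨τ, l, hl, rfl, fun j => ?_⟩
      have h1 : a l j ≤ lcmExp a τ' j := Finset.le_sup (f := fun i => a i j) hl'
      rwa [hlcm] at h1
    · push_neg at h
      have hsub : τ' ⊆ τ := h
      obtain ⟨l, hl, hl'⟩ := Finset.exists_of_ssubset (hsub.ssubset_of_ne hne)
      exact ⟨τ', l, hl', hlcm, fun j => Finset.le_sup (f := fun i => a i j) hl⟩
  obtain ⟨ρ, l, hlρ, hρ, halm⟩ := key
  -- Part 1: find a strict divisor
  have part1 : ∃ t : Fin r, StrictlyDivides (a t) m := by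
    by_cases hsd : StrictlyDivides (a l) m
    · exact ⟨l, hsd⟩
    · rw [StrictlyDivides] at hsd
      push_neg at hsd
      obtain ⟨i, hi1, j, hj⟩ := hsd
      have hji : j = i := by
        by_contra hji
        simp only [if_neg hji] at hj
        have := halm j
        omega
      subst hji
      simp only [eq_self_iff_true, if_true] at hj
      have hali : a l j = m j := by have := halm j; omega
      -- find k ∈ ρ achieving the sup at variable j
      have hρne : ρ.Nonempty := by
        by_contra hne'
        rw [Finset.not_nonempty_iff_eq_empty] at hne'
        rw [hne'] at hρ
        have : m j = 0 := by rw [← hρ]; simp [lcmExp]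
        omega
      obtain ⟨k, hkρ, hk⟩ := Finset.exists_mem_eq_sup ρ hρne (fun i => a i j)
      have hkm : a k j = m j := by
        rw [← hρ]; exact hk.symm
      have hlk : a l ≠ a k := fun h => hlρ (by rwa [hinj h])
      obtain ⟨t, _, _, ht⟩ := hgen l k hlk ⟨j, by omega, by omega⟩
      refine ⟨t, strictlyDivides_mono ht (fun j' => ?_) j ?_⟩
      · have h1 := halm j'
        have h2 : a k j' ≤ m j' := by
          rw [← hρ]; exact Finset.le_sup (f := fun i => a i j') hkρ
        simp only [Pi.sup_apply]
        omega
      · simp only [Pi.sup_apply]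
        omega
  refine ⟨part1, fun hle => ?_⟩
  obtain ⟨t, ht⟩ := part1
  -- mon (a t) ∈ M
  have htM : mon (a t) ∈ M := by
    rw [hmin.1]
    exact Ideal.subset_span ⟨t, rfl⟩
  have htspan := hle htM
  -- rewrite the span as a monomial-image span
  have hset : {p : MvPolynomial (Fin n) ℂ |
      ∃ i, 1 ≤ m i ∧ p = (X i : MvPolynomial (Fin n) ℂ) ^ m i} =
      (fun s => monomial s (1 : ℂ)) ''
        {s : Fin n →₀ ℕ | ∃ i, 1 ≤ m i ∧ s = Finsupp.single i (m i)} := by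
    ext p
    constructor
    · rintro ⟨i, hi, rfl⟩
      exact ⟨Finsupp.single i (m i), ⟨i, hi, rfl⟩, X_pow_eq_monomial.symm⟩
    · rintro ⟨s, ⟨i, hi, rfl⟩, rfl⟩
      exact ⟨i, hi, X_pow_eq_monomial.symm⟩
  rw [hset, mon_eq_monomial, mem_ideal_span_monomial_image] at htspan
  have hsupp : (Finsupp.equivFunOnFinite.symm (a t)) ∈
      (monomial (Finsupp.equivFunOnFinite.symm (a t)) (1 : ℂ)).support := by
    rw [mem_support_iff, coeff_monomial, if_pos rfl]
    exact one_ne_zero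
  obtain ⟨si, ⟨i, hi, rfl⟩, hsile⟩ := htspan _ hsupp
  have h2 : m i ≤ a t i := by
    have h3 := hsile i
    simpa using h3
  have hti : a t i + 1 ≤ m i := by
    have := ht i hi i
    simpa using this
  omega
end

section
/- Let M be a monomial ideal in ℂ[z₁,…,zₙ] with minimal generators m₁,…,m_r, let D be an integer strictly larger than the degree of any mᵢ in any variable, and let M* = (m₁,…,m_r, z₁^D,…,zₙ^D). Then M* is Artinian, and M* is generic whenever M is generic. -/
open MvPolynomial

/-- Genericity of a list of (exponent vectors of) monomial generators: whenever two
distinct generators have the same positive degree in some variable, a third generator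
strictly divides their lcm. -/
def GenericList {n : ℕ} {ι : Type*} (g : ι → Fin n → ℕ) : Prop :=
  ∀ j k : ι, g j ≠ g k → (∃ i, 1 ≤ g j i ∧ g j i = g k i) →
    ∃ l, g l ≠ g j ∧ g l ≠ g k ∧ StrictlyDivides (g l) (g j ⊔ g k)

lemma fd_aux {n : ℕ} (D : ℕ) (I : Ideal (MvPolynomial (Fin n) ℂ))
    (hX : ∀ i : Fin n, (X i : MvPolynomial (Fin n) ℂ) ^ D ∈ I) :
    FiniteDimensional ℂ (MvPolynomial (Fin n) ℂ ⧸ I) := by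
  set T : Set (MvPolynomial (Fin n) ℂ) :=
    Set.range (fun f : Fin n → Fin D =>
      monomial (Finsupp.equivFunOnFinite.symm fun i => (f i : ℕ)) (1 : ℂ)) with hT
  have hspan : Submodule.span ℂ (Ideal.Quotient.mk I '' T) = ⊤ := by
    rw [eq_top_iff]
    rintro x -
    obtain ⟨p, rfl⟩ := Ideal.Quotient.mk_surjective x
    rw [← p.support_sum_monomial_coeff, map_sum]
    apply Submodule.sum_mem
    intro s _
    by_cases h : ∀ i, s i < D
    · have he : (monomial s (coeff s p) : MvPolynomial (Fin n) ℂ)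
          = coeff s p • monomial s 1 := by
        rw [smul_monomial, smul_eq_mul, mul_one]
      rw [he, ← Ideal.Quotient.mkₐ_eq_mk ℂ, map_smul, Ideal.Quotient.mkₐ_eq_mk]
      apply Submodule.smul_mem
      apply Submodule.subset_span
      refine ⟨monomial s 1, ⟨fun i => ⟨s i, h i⟩, ?_⟩, rfl⟩
      show monomial (Finsupp.equivFunOnFinite.symm
          fun i => ((⟨s i, h i⟩ : Fin D) : ℕ)) (1 : ℂ) = monomial s 1
      have hs : Finsupp.equivFunOnFinite.symm
          (fun i => ((⟨s i, h i⟩ : Fin D) : ℕ)) = s := by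
        rw [Equiv.symm_apply_eq]; rfl
      rw [hs]
    · push_neg at h
      obtain ⟨i, hi⟩ := h
      have hmem : (monomial s (coeff s p) : MvPolynomial (Fin n) ℂ) ∈ I := by
        have he : (monomial s (coeff s p) : MvPolynomial (Fin n) ℂ)
            = X i ^ D * monomial (s - Finsupp.single i D) (coeff s p) := by
          rw [X_pow_eq_monomial, monomial_mul, one_mul,
            add_tsub_cancel_of_le (Finsupp.single_le_iff.mpr hi)]
        rw [he]
        exact Ideal.mul_mem_right _ _ (hX i)
      rw [Ideal.Quotient.eq_zero_iff_mem.mpr hmem]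
      exact Submodule.zero_mem _
  have : Module.Finite ℂ (MvPolynomial (Fin n) ℂ ⧸ I) := by
    rw [Module.finite_def]
    exact Submodule.fg_def.mpr ⟨_, (Set.finite_range _).image _, hspan⟩
  exact this

/-- If `D` exceeds all degrees of the minimal generators of `M`, then
`M* = M + (z₁^D,…,zₙ^D)` is Artinian, and generic whenever `M` is generic.
The generators of `M*` are those of `M` together with the ghost generators `zᵢ^D`. -/
theorem stmt12 {n r : ℕ} (a : Fin r → Fin n → ℕ) (D : ℕ)
    (M Mstar : Ideal (MvPolynomial (Fin n) ℂ)) (hmin : MinGens M a)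
    (hD : ∀ j i, a j i < D)
    (hMstar : Mstar = Ideal.span
      ((Set.range fun j => mon (a j)) ∪
        Set.range fun i => (X i : MvPolynomial (Fin n) ℂ) ^ D)) :
    FiniteDimensional ℂ (MvPolynomial (Fin n) ℂ ⧸ Mstar) ∧
    (GenericList a →
      GenericList (Sum.elim a (fun i : Fin n => fun k => if k = i then D else 0))) := by
  constructor
  · refine fd_aux D Mstar (fun i => ?_)
    rw [hMstar]
    exact Ideal.subset_span (Or.inr ⟨i, rfl⟩)
  · intro hgen j k hne hcommon
    rcases j with j | i <;> rcases k with k | i'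
    · obtain ⟨l, h1, h2, h3⟩ := hgen j k (by simpa using hne) (by simpa using hcommon)
      exact ⟨Sum.inl l, by simpa using h1, by simpa using h2, by simpa using h3⟩
    · exfalso
      obtain ⟨v, hv1, hv2⟩ := hcommon
      simp only [Sum.elim_inl, Sum.elim_inr] at hv1 hv2
      by_cases h : v = i'
      · subst h; rw [if_pos rfl] at hv2; exact absurd hv2 (hD j v).ne
      · rw [if_neg h] at hv2; omega
    · exfalso
      obtain ⟨v, hv1, hv2⟩ := hcommon
      simp only [Sum.elim_inl, Sum.elim_inr] at hv1 hv2
      by_cases h : v = i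
      · subst h; rw [if_pos rfl] at hv2; have := hD k v; omega
      · rw [if_neg h] at hv1; omega
    · exfalso
      obtain ⟨v, hv1, hv2⟩ := hcommon
      simp only [Sum.elim_inr] at hv1 hv2
      have hvi : v = i := by by_contra h; rw [if_neg h] at hv1; omega
      rw [if_pos hvi] at hv1 hv2
      have hvi' : v = i' := by
        by_contra h
        rw [if_neg h] at hv2
        omega
      have hii : i = i' := hvi.symm.trans hvi'
      subst hii
      exact hne rfl
end

section
/- Let M be an Artinian monomial ideal in ℂ[z₁,…,zₙ] with minimal generators m₁,…,m_r, and suppose M is generic. Then the intersection ⋂ 𝔪^{α_τ}, taken over all subsets τ ⊆ {1,…,r} in the Scarf complex Δ_M with |τ| = n, contains M, where α_τ is the exponent vector of m_τ = lcm{mᵢ : i ∈ τ}. -/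
open MvPolynomial

/-- `τ` is a face of the Scarf complex. -/
def ScarfFace {n r : ℕ} (a : Fin r → Fin n → ℕ) (I : Finset (Fin r)) : Prop :=
  ∀ I' : Finset (Fin r), lcmExp a I' = lcmExp a I → I' = I

/-- For an Artinian generic monomial ideal `M`, the intersection of the irreducible
ideals `𝔪^{α_τ}` over the facets `τ` (faces with `n` vertices) of the Scarf complex
contains `M`. -/
theorem stmt19 {n r : ℕ} (a : Fin r → Fin n → ℕ)
    (M : Ideal (MvPolynomial (Fin n) ℂ)) (hmin : MinGens M a)
    (hart : FiniteDimensional ℂ (MvPolynomial (Fin n) ℂ ⧸ M))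
    (hgen : GenericList a) :
    M ≤ ⨅ (τ : Finset (Fin r)) (_ : ScarfFace a τ ∧ τ.card = n),
      Ideal.span {p : MvPolynomial (Fin n) ℂ |
        ∃ i, 1 ≤ lcmExp a τ i ∧ p = (X i : MvPolynomial (Fin n) ℂ) ^ lcmExp a τ i} := by
  refine le_iInf fun τ => le_iInf fun hτ => ?_
  obtain ⟨hsc, hcard⟩ := hτ
  set α := lcmExp a τ with hα
  -- every coordinate of α is positive
  have hsupp : ∀ i, 1 ≤ α i := by
    have key : ∀ k ∈ τ, ∃ i, (τ.erase k).sup (fun m => a m i) < α i := by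
      intro k hk
      have hne : τ.erase k ≠ τ := fun h => (Finset.erase_eq_self.mp h) hk
      have hlt : lcmExp a (τ.erase k) ≠ α := fun h => hne (hsc _ h)
      by_contra hcon
      push_neg at hcon
      apply hlt
      funext i
      exact le_antisymm (Finset.sup_mono (Finset.erase_subset _ _)) (hcon i)
    choose g hg using key
    have hG : Function.Injective (fun k : {x // x ∈ τ} => g k.1 k.2) := by
      rintro ⟨k, hk⟩ ⟨k', hk'⟩ h
      simp only at h
      by_contra hne
      have hkk' : k ≠ k' := fun e => hne (Subtype.ext e)
      have h1 := hg k hk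
      have h2 := hg k' hk'
      rw [← h] at h2
      have hak : a k (g k hk) < α (g k hk) :=
        lt_of_le_of_lt (Finset.le_sup (f := fun m => a m (g k hk)) (b := k) (Finset.mem_erase.mpr ⟨hkk', hk⟩)) h2
      have hle : α (g k hk) ≤ a k (g k hk) ⊔ (τ.erase k).sup (fun m => a m (g k hk)) := by
        have hsub : τ ⊆ insert k (τ.erase k) := by rw [Finset.insert_erase hk]
        calc α (g k hk) = τ.sup (fun m => a m (g k hk)) := rfl
          _ ≤ (insert k (τ.erase k)).sup (fun m => a m (g k hk)) := Finset.sup_mono hsub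
          _ = _ := Finset.sup_insert
      exact absurd hle (not_le.mpr (sup_lt_iff.mpr ⟨hak, h1⟩))
    have hcards : Fintype.card {x // x ∈ τ} = Fintype.card (Fin n) := by
      simp [Fintype.card_coe, hcard]
    have hsurj : Function.Surjective (fun k : {x // x ∈ τ} => g k.1 k.2) :=
      ((Fintype.bijective_iff_injective_and_card _).mpr ⟨hG, hcards⟩).2
    intro i
    obtain ⟨⟨k, hk⟩, hki⟩ := hsurj i
    simp only at hki
    have := hg k hk
    rw [hki] at this
    omega
  rw [hmin.1, Ideal.span_le]
  rintro _ ⟨j, rfl⟩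
  have hdiv : ∃ i, α i ≤ a j i := by
    by_contra hcon
    push_neg at hcon
    by_cases hj : j ∈ τ
    · have heq : lcmExp a (τ.erase j) = α := by
        funext i
        refine le_antisymm (Finset.sup_mono (Finset.erase_subset _ _)) ?_
        obtain ⟨m, hm, hmax⟩ := Finset.exists_mem_eq_sup τ ⟨j, hj⟩ (fun m => a m i)
        have hmj : m ≠ j := by
          intro e
          rw [e] at hmax
          have h1 := hcon i
          have h2 : α i = a j i := hmax
          omega
        calc α i = a m i := hmax
          _ ≤ _ := by exact Finset.le_sup (f := fun m' => a m' i) (b := m) (Finset.mem_erase.mpr ⟨hmj, hm⟩)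
      exact (Finset.erase_eq_self.mp (hsc _ heq)) hj
    · have heq : lcmExp a (insert j τ) = α := by
        funext i
        show (insert j τ).sup (fun m => a m i) = _
        rw [Finset.sup_insert]
        exact sup_eq_right.mpr (le_of_lt (hcon i))
      exact hj (Finset.insert_eq_self.mp (hsc _ heq))
  obtain ⟨i, hi⟩ := hdiv
  have hfac : mon (a j) = X i ^ α i *
      (X i ^ (a j i - α i) * ∏ k ∈ Finset.univ.erase i, (X k : MvPolynomial (Fin n) ℂ) ^ a j k) := by
    rw [mon, ← Finset.mul_prod_erase Finset.univ _ (Finset.mem_univ i), ← mul_assoc, ← pow_add,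
      Nat.add_sub_cancel' hi]
  show mon (a j) ∈ Ideal.span _
  rw [hfac]
  exact Ideal.mul_mem_right _ _ (Ideal.subset_span ⟨i, hsupp i, rfl⟩)
end
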